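/- arXiv:2312.17414 — 4 statements merged into one kernel-verified Lean document; each statement's English description precedes it below -/
import Mathlib

section
/- For points p1,…,p5 ∈ ℝ⁴ and a > 0, the trace of A(R,T) satisfies trace(A(R,T)) = (2/(5a²)) · Σ_{1 ≤ i < j ≤ 5} d_{ij}, where d_{ij} = ‖p_j − p_i‖² and the sum runs over all ten squared edge lengths of the pentatope with vertices p1,…,p5. -/
/-! By cyclicity of the trace, `trace (R⁻ᵀ G R⁻¹) = trace ((RᵀR)⁻¹ G)`, where `G = TᵀT` is the Gram
matrix of the edge vectors `eᵢ = pᵢ₊₁ - p₁`. For the regular pentatope `RᵀR = (a²/2) (I + J)` with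
`J` the all-ones matrix, and `(I + J)⁻¹ = I - J/5`, so the trace is
`(2/(5a²)) (5 Σ ‖eᵢ‖² - ‖Σ eᵢ‖²)`. By the Lagrange identity
`Σ_{i<j} ‖xⱼ - xᵢ‖² = n Σ ‖xᵢ‖² - ‖Σ xᵢ‖²`, applied to the five points `xᵢ = pᵢ - p₁`,
this is `(2/(5a²)) Σ_{i<j} d_{ij}`. -/

open Real Matrix Finset

/-- The edge-vector matrix of the regular pentatope with edge length `a`. -/
noncomputable def regularPentatopeMatrix (a : ℝ) : Matrix (Fin 4) (Fin 4) ℝ :=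
  !![a * Real.sqrt 3 / 2, a * Real.sqrt 3 / 2, a * Real.sqrt 3 / 3, a * Real.sqrt 3 / 3;
     -a / 2,              a / 2,               0,                   0;
     0,                   0,                   a * Real.sqrt 6 / 3, a * Real.sqrt 6 / 12;
     0,                   0,                   0,                   a * Real.sqrt 10 / 4]

/-- The edge-vector matrix of the pentatope with vertices `p 0, …, p 4`: the 4×4 matrix
whose columns are `p 1 − p 0, p 2 − p 0, p 3 − p 0, p 4 − p 0`. -/
noncomputable def edgeMatrix (p : Fin 5 → EuclideanSpace ℝ (Fin 4)) :
    Matrix (Fin 4) (Fin 4) ℝ :=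
  Matrix.of fun (k : Fin 4) (i : Fin 4) => (p i.succ - p 0) k

/-- `A(R,T) = (R⁻¹)ᵀ · TᵀT · R⁻¹`. -/
noncomputable def shapeMatrix (a : ℝ) (p : Fin 5 → EuclideanSpace ℝ (Fin 4)) :
    Matrix (Fin 4) (Fin 4) ℝ :=
  ((regularPentatopeMatrix a)⁻¹)ᵀ * ((edgeMatrix p)ᵀ * edgeMatrix p) *
    (regularPentatopeMatrix a)⁻¹


open scoped InnerProductSpace

theorem norm_sum_sq_eq_sum_sum_inner {ι E : Type*} [Fintype ι] [NormedAddCommGroup E]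
    [InnerProductSpace ℝ E] (x : ι → E) : ‖∑ i, x i‖ ^ 2 = ∑ i, ∑ j, ⟪x i, x j⟫_ℝ := by
  rw [← real_inner_self_eq_norm_sq, sum_inner]
  simp_rw [inner_sum]

namespace Matrix

variable {n : Type*}

theorem transpose_mul_self_of_columns_eq_gram {m : Type*} [Fintype m] (v : n → EuclideanSpace ℝ m) :
    (of fun k i => v i k)ᵀ * (of fun k i => v i k) = gram ℝ v := by
  ext i j
  simp [mul_apply, PiLp.inner_apply, mul_comm]

variable [Fintype n]

-- No invertibility hypotheses: for `k = 0` or singular `A` both sides are `0`.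
theorem inv_smul_of_field [DecidableEq n] {K : Type*} [Field K] (k : K) (A : Matrix n n K) :
    (k • A)⁻¹ = k⁻¹ • A⁻¹ := by
  obtain rfl | hk := eq_or_ne k 0
  · simp
  by_cases hA : IsUnit A.det
  · exact inv_smul' A (Units.mk0 k hk) hA
  · have hkA : ¬IsUnit (k • A).det := by simpa [det_smul, hk] using hA
    rw [nonsing_inv_apply_not_isUnit _ hA, nonsing_inv_apply_not_isUnit _ hkA, smul_zero]

theorem trace_transpose_inv_mul_mul_inv [DecidableEq n] {R : Type*} [CommRing R]
    (B M : Matrix n n R) : (B⁻¹ᵀ * M * B⁻¹).trace = ((Bᵀ * B)⁻¹ * M).trace := by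
  rw [trace_mul_cycle, transpose_nonsing_inv, ← mul_inv_rev]

variable (n) in
def allOnes (R : Type*) [One R] : Matrix n n R := of fun _ _ => 1

theorem allOnes_mul_allOnes {R : Type*} [Semiring R] :
    allOnes n R * allOnes n R = (Fintype.card n : R) • allOnes n R := by
  ext i j
  simp [allOnes, mul_apply]

theorem inv_one_add_allOnes [DecidableEq n] {K : Type*} [Field K] [CharZero K] :
    (1 + allOnes n K)⁻¹ = 1 - ((Fintype.card n : K) + 1)⁻¹ • allOnes n K := by
  refine inv_eq_right_inv ?_
  have hc : ((Fintype.card n : K) + 1)⁻¹ * (Fintype.card n + 1) = 1 :=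
    inv_mul_cancel₀ (Nat.cast_add_one_ne_zero _)
  rw [add_mul, one_mul, mul_sub, mul_one, Matrix.mul_smul, allOnes_mul_allOnes, smul_smul]
  linear_combination (norm := module) -hc • allOnes n K

theorem trace_allOnes_mul {R : Type*} [NonAssocSemiring R] (M : Matrix n n R) :
    (allOnes n R * M).trace = ∑ i, ∑ j, M i j := by
  simp only [trace, diag, allOnes, mul_apply, of_apply, one_mul]
  exact sum_comm

theorem trace_gram_real {E : Type*} [NormedAddCommGroup E] [InnerProductSpace ℝ E] (v : n → E) :
    (gram ℝ v).trace = ∑ i, ‖v i‖ ^ 2 := by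
  simp [trace]

theorem trace_one_sub_smul_allOnes_mul_gram [DecidableEq n] {E : Type*} [NormedAddCommGroup E]
    [InnerProductSpace ℝ E] (c : ℝ) (v : n → E) :
    ((1 - c • allOnes n ℝ) * gram ℝ v).trace = ∑ i, ‖v i‖ ^ 2 - c * ‖∑ i, v i‖ ^ 2 := by
  rw [sub_mul, trace_sub, one_mul, smul_mul, trace_smul, trace_allOnes_mul, trace_gram_real,
    norm_sum_sq_eq_sum_sum_inner, smul_eq_mul]
  simp only [gram_apply]

end Matrix

theorem Finset.two_nsmul_sum_filter_lt_of_symm {ι M : Type*} [Fintype ι] [LinearOrder ι]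
    [AddCommMonoid M] (f : ι → ι → M) (hf : ∀ i j, f i j = f j i) (hdiag : ∀ i, f i i = 0) :
    2 • ∑ ij ∈ univ.filter (fun ij : ι × ι => ij.1 < ij.2), f ij.1 ij.2 = ∑ i, ∑ j, f i j := by
  have hsplit : ∀ i j, f i j = (if i < j then f i j else 0) + (if j < i then f j i else 0) := by
    intro i j
    rcases lt_trichotomy i j with h | rfl | h
    · simp [h, h.not_gt]
    · simp [hdiag]
    · simp [h, h.not_gt, hf i j]
  calc 2 • ∑ ij ∈ univ.filter (fun ij : ι × ι => ij.1 < ij.2), f ij.1 ij.2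
      = ∑ i, ∑ j, (if i < j then f i j else 0) + ∑ i, ∑ j, (if j < i then f j i else 0) := by
        rw [sum_comm (f := fun i j => if j < i then f j i else 0), two_nsmul, sum_filter,
          Fintype.sum_prod_type' (f := fun i j => if i < j then f i j else 0)]
    _ = ∑ i, ∑ j, f i j := by simp only [← sum_add_distrib, ← hsplit]

theorem sum_filter_lt_norm_sub_sq {ι E : Type*} [Fintype ι] [LinearOrder ι]
    [NormedAddCommGroup E] [InnerProductSpace ℝ E] (x : ι → E) :
    ∑ ij ∈ univ.filter (fun ij : ι × ι => ij.1 < ij.2), ‖x ij.2 - x ij.1‖ ^ 2 =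
      Fintype.card ι * ∑ i, ‖x i‖ ^ 2 - ‖∑ i, x i‖ ^ 2 := by
  have hsymm := two_nsmul_sum_filter_lt_of_symm (fun i j => ‖x j - x i‖ ^ 2)
    (fun i j => by rw [norm_sub_rev]) (by simp)
  have hexpand : ∑ i, ∑ j, ‖x j - x i‖ ^ 2 =
      2 * (Fintype.card ι * ∑ i, ‖x i‖ ^ 2 - ‖∑ i, x i‖ ^ 2) := by
    simp only [norm_sub_sq_real, sum_add_distrib, sum_sub_distrib, ← mul_sum, sum_const,
      card_univ, nsmul_eq_mul]
    rw [norm_sum_sq_eq_sum_sum_inner, sum_comm]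
    ring
  rw [hexpand, two_nsmul] at hsymm
  linarith

theorem sum_filter_lt_norm_sub_sq_eq_sum_edges {n : ℕ} {E : Type*} [NormedAddCommGroup E]
    [InnerProductSpace ℝ E] (p : Fin (n + 1) → E) :
    ∑ ij ∈ univ.filter (fun ij : Fin (n + 1) × Fin (n + 1) => ij.1 < ij.2),
        ‖p ij.2 - p ij.1‖ ^ 2 =
      (n + 1) * ∑ i : Fin n, ‖p i.succ - p 0‖ ^ 2 - ‖∑ i : Fin n, (p i.succ - p 0)‖ ^ 2 := by
  have h := sum_filter_lt_norm_sub_sq (fun i => p i - p 0)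
  simp only [sub_sub_sub_cancel_right, Fin.sum_univ_succ (n := n), sub_self, norm_zero,
    zero_add, Fintype.card_fin] at h
  rw [h]
  push_cast
  ring

theorem regularPentatopeMatrix_transpose_mul_self (a : ℝ) :
    (regularPentatopeMatrix a)ᵀ * regularPentatopeMatrix a =
      (a ^ 2 / 2) • (1 + allOnes (Fin 4) ℝ) := by
  have h3 : √3 ^ 2 = 3 := Real.sq_sqrt (by norm_num)
  have h6 : √6 ^ 2 = 6 := Real.sq_sqrt (by norm_num)
  have h10 : √10 ^ 2 = 10 := Real.sq_sqrt (by norm_num)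
  ext i j
  fin_cases i <;> fin_cases j <;>
    simp [regularPentatopeMatrix, allOnes, mul_apply, Fin.sum_univ_four, one_apply] <;>
    ring_nf <;> simp [h3, h6, h10] <;> ring

theorem edgeMatrix_transpose_mul_self (p : Fin 5 → EuclideanSpace ℝ (Fin 4)) :
    (edgeMatrix p)ᵀ * edgeMatrix p = gram ℝ (fun i : Fin 4 => p i.succ - p 0) :=
  transpose_mul_self_of_columns_eq_gram _

theorem trace_shapeMatrix_general (a : ℝ) (p : Fin 5 → EuclideanSpace ℝ (Fin 4)) :
    (shapeMatrix a p).trace =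
      (2 / (5 * a ^ 2)) *
        ∑ ij ∈ Finset.univ.filter (fun ij : Fin 5 × Fin 5 => ij.1 < ij.2),
          ‖p ij.2 - p ij.1‖ ^ 2 := by
  rw [shapeMatrix, trace_transpose_inv_mul_mul_inv, regularPentatopeMatrix_transpose_mul_self,
    inv_smul_of_field, inv_one_add_allOnes, edgeMatrix_transpose_mul_self, smul_mul, trace_smul,
    trace_one_sub_smul_allOnes_mul_gram, sum_filter_lt_norm_sub_sq_eq_sum_edges]
  simp only [Fintype.card_fin, smul_eq_mul]
  ring

/-- `trace(A(R,T)) = (2/(5a²)) · Σ_{1 ≤ i < j ≤ 5} d_{ij}` where `d_{ij} = ‖p_j − p_i‖²`. -/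
theorem trace_shapeMatrix (a : ℝ) (ha : 0 < a) (p : Fin 5 → EuclideanSpace ℝ (Fin 4)) :
    (shapeMatrix a p).trace =
      (2 / (5 * a ^ 2)) *
        ∑ ij ∈ Finset.univ.filter (fun ij : Fin 5 × Fin 5 => ij.1 < ij.2),
          ‖p ij.2 - p ij.1‖ ^ 2 :=
  trace_shapeMatrix_general a p
end

section
/- Let p1,…,p5 ∈ ℝ⁴ be affinely independent, let v = |det T| / 24 > 0 be the hypervolume of the pentatope with these vertices, and let a = (96·v/√5)^{1/4}. Then the quality heuristic η⁽³⁾ := 2 · (det A(R,T))^{1/4} / √(trace(A(R,T)·A(R,T)ᵀ)) — which equals the ratio of the geometric mean to the root-mean-square of the four eigenvalues of A(R,T) — satisfies η⁽³⁾ = 6 · 5^{3/4} · √(384·v / Θ), where Θ is the explicit polynomial in the squared edge lengths given in the context. -/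
open Real Matrix

/-- Squared Euclidean distance `d_{ij} = ‖p_j − p_i‖²`. -/
noncomputable def dsq (p : Fin 5 → EuclideanSpace ℝ (Fin 4)) (i j : Fin 5) : ℝ :=
  ‖p j - p i‖ ^ 2

/-- The explicit polynomial `Θ` in the ten squared edge lengths. -/
def Theta (d12 d13 d14 d15 d23 d24 d25 d34 d35 d45 : ℝ) : ℝ :=
  600 * (d12 - d13) ^ 2 + 900 * d23 ^ 2 + 100 * (-2 * (d12 + d13) + d23) ^ 2 +
  75 * (d12 - d13 - 3 * d24 + 3 * d34) ^ 2 +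
  25 * (d12 + d13 - 3 * d14 + d23 - 3 * (d24 + d34)) ^ 2 +
  25 * (d12 + d13 - 6 * d14 - 2 * d23 + 3 * (d24 + d34)) ^ 2 +
  45 * (d12 - d13 + d24 - 4 * d25 - d34 + 4 * d35) ^ 2 +
  15 * (d12 + d13 + 2 * d14 - 8 * d15 - 2 * d23 - d24 + 4 * d25 - d34 + 4 * d35) ^ 2 +
  30 * (-d12 - d13 + d14 + 2 * d15 - d23 + d24 + 2 * d25 + d34 + 2 * d35 - 6 * d45) ^ 2 +
  9 * (d12 + d13 + d14 - 4 * d15 + d23 + d24 - 4 * d25 + d34 - 4 * (d35 + d45)) ^ 2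

/-!
The Gram matrix of the regular pentatope is `RᵀR = (a²/2)(I + J)` with `J` the all-ones matrix, so
`det R ² = 5a⁸/16`; the choice of `a` makes this `(24v)² = det T ²`, hence `det A = 1`. By cyclicity
of the trace, `tr(A Aᵀ) = tr(M G M G)` with `M = TᵀT` and `G = (RᵀR)⁻¹ = (2/a²)(I - J/5)`. By the law
of cosines `M` is a linear function of the squared edge lengths, and expanding gives
`tr(M G M G) = (2/a²)² Θ / 3600`.
-/

section OnesMatrix

variable {ι K : Type*} [Fintype ι]

def onesMatrix (ι K : Type*) [One K] : Matrix ι ι K := Matrix.of fun _ _ => 1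

theorem onesMatrix_mul_self [Semiring K] :
    onesMatrix ι K * onesMatrix ι K = (Fintype.card ι : K) • onesMatrix ι K := by
  ext i j
  simp [onesMatrix, Matrix.mul_apply]

theorem det_one_add_onesMatrix [DecidableEq ι] [CommRing K] :
    (1 + onesMatrix ι K).det = Fintype.card ι + 1 := by
  have hJ : onesMatrix ι K =
      (replicateCol Unit (1 : ι → K) * replicateRow Unit (1 : ι → K) : Matrix ι ι K) := by
    ext i j
    simp [onesMatrix, Matrix.mul_apply]
  rw [hJ, det_one_add_replicateCol_mul_replicateRow]
  simp [add_comm]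

theorem one_add_onesMatrix_mul_one_sub [DecidableEq ι] [Field K] [CharZero K] :
    (1 + onesMatrix ι K) * (1 - ((Fintype.card ι : K) + 1)⁻¹ • onesMatrix ι K) = 1 := by
  have hn : (Fintype.card ι : K) + 1 ≠ 0 := Nat.cast_add_one_ne_zero _
  rw [Matrix.add_mul, Matrix.one_mul, Matrix.mul_sub, Matrix.mul_one, Matrix.mul_smul,
    onesMatrix_mul_self, smul_smul]
  ext i j
  simp only [Matrix.add_apply, Matrix.sub_apply, Matrix.smul_apply, smul_eq_mul]
  field_simp
  ring

end OnesMatrix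

section Congruence

variable {n K : Type*} [Fintype n] [DecidableEq n] [Field K]

theorem det_transpose_inv_mul_mul_inv (R M : Matrix n n K) :
    ((R⁻¹)ᵀ * M * R⁻¹).det = M.det / R.det ^ 2 := by
  rw [det_mul, det_mul, det_transpose, det_nonsing_inv, Ring.inverse_eq_inv']
  ring

theorem trace_transpose_inv_mul_mul_inv_mul_transpose (R M : Matrix n n K) :
    ((R⁻¹)ᵀ * M * R⁻¹ * ((R⁻¹)ᵀ * M * R⁻¹)ᵀ).trace =
      (M * (Rᵀ * R)⁻¹ * Mᵀ * (Rᵀ * R)⁻¹).trace := by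
  have hG : (Rᵀ * R)⁻¹ = R⁻¹ * (R⁻¹)ᵀ := by
    rw [Matrix.mul_inv_rev, transpose_nonsing_inv]
  rw [hG, transpose_mul, transpose_mul, transpose_transpose]
  simp only [Matrix.mul_assoc]
  rw [trace_mul_comm (R⁻¹)ᵀ]
  simp only [Matrix.mul_assoc]

end Congruence

theorem regularPentatopeMatrix_gram (a : ℝ) :
    (regularPentatopeMatrix a)ᵀ * regularPentatopeMatrix a =
      (a ^ 2 / 2) • (1 + onesMatrix (Fin 4) ℝ) := by
  have h3 : √3 ^ 2 = 3 := Real.sq_sqrt (by norm_num)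
  have h6 : √6 ^ 2 = 6 := Real.sq_sqrt (by norm_num)
  have h10 : √10 ^ 2 = 10 := Real.sq_sqrt (by norm_num)
  ext i j
  fin_cases i <;> fin_cases j <;>
    simp [regularPentatopeMatrix, onesMatrix, Matrix.mul_apply, Fin.sum_univ_four] <;>
    ring_nf <;> simp only [h3, h6, h10] <;> ring

theorem det_regularPentatopeMatrix_sq (a : ℝ) :
    (regularPentatopeMatrix a).det ^ 2 = 5 * a ^ 8 / 16 := by
  have h := congrArg det (regularPentatopeMatrix_gram a)
  rw [det_mul, det_transpose, det_smul, det_one_add_onesMatrix] at h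
  rw [sq, h]
  norm_num
  ring

theorem inv_gram_regularPentatopeMatrix {a : ℝ} (ha : a ≠ 0) :
    ((regularPentatopeMatrix a)ᵀ * regularPentatopeMatrix a)⁻¹ =
      (2 / a ^ 2) • (1 - (5 : ℝ)⁻¹ • onesMatrix (Fin 4) ℝ) := by
  apply inv_eq_right_inv
  rw [regularPentatopeMatrix_gram, smul_mul_smul,
    show (5 : ℝ)⁻¹ = ((Fintype.card (Fin 4) : ℝ) + 1)⁻¹ by norm_num,
    one_add_onesMatrix_mul_one_sub, div_mul_div_comm, mul_comm, div_self (by positivity),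
    one_smul]

theorem dsq_comm (p : Fin 5 → EuclideanSpace ℝ (Fin 4)) (i j : Fin 5) :
    dsq p i j = dsq p j i := by
  rw [dsq, dsq, norm_sub_rev]

@[simp]
theorem dsq_self (p : Fin 5 → EuclideanSpace ℝ (Fin 4)) (i : Fin 5) : dsq p i i = 0 := by
  simp [dsq]

theorem edgeMatrix_gram_apply (p : Fin 5 → EuclideanSpace ℝ (Fin 4)) (i j : Fin 4) :
    ((edgeMatrix p)ᵀ * edgeMatrix p) i j =
      (dsq p 0 i.succ + dsq p 0 j.succ - dsq p i.succ j.succ) / 2 := by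
  have h : ((edgeMatrix p)ᵀ * edgeMatrix p) i j = inner ℝ (p i.succ - p 0) (p j.succ - p 0) := by
    simp [edgeMatrix, Matrix.mul_apply, PiLp.inner_apply, mul_comm]
  have hd : dsq p i.succ j.succ = ‖(p j.succ - p 0) - (p i.succ - p 0)‖ ^ 2 := by
    rw [dsq, sub_sub_sub_cancel_right]
  rw [h, hd, norm_sub_sq_real, dsq, dsq, real_inner_comm]
  ring

noncomputable def pentatopeGram (d12 d13 d14 d15 d23 d24 d25 d34 d35 d45 : ℝ) :
    Matrix (Fin 4) (Fin 4) ℝ :=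
  !![d12, (d12 + d13 - d23) / 2, (d12 + d14 - d24) / 2, (d12 + d15 - d25) / 2;
     (d12 + d13 - d23) / 2, d13, (d13 + d14 - d34) / 2, (d13 + d15 - d35) / 2;
     (d12 + d14 - d24) / 2, (d13 + d14 - d34) / 2, d14, (d14 + d15 - d45) / 2;
     (d12 + d15 - d25) / 2, (d13 + d15 - d35) / 2, (d14 + d15 - d45) / 2, d15]

theorem edgeMatrix_gram (p : Fin 5 → EuclideanSpace ℝ (Fin 4)) :
    (edgeMatrix p)ᵀ * edgeMatrix p =
      pentatopeGram (dsq p 0 1) (dsq p 0 2) (dsq p 0 3) (dsq p 0 4) (dsq p 1 2)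
        (dsq p 1 3) (dsq p 1 4) (dsq p 2 3) (dsq p 2 4) (dsq p 3 4) := by
  ext i j
  rw [edgeMatrix_gram_apply]
  fin_cases i <;> fin_cases j <;>
    simp [pentatopeGram, dsq_comm p 2 1, dsq_comm p 3 1, dsq_comm p 4 1,
      dsq_comm p 3 2, dsq_comm p 4 2, dsq_comm p 4 3] <;> ring

theorem trace_pentatopeGram_mul_sq (d12 d13 d14 d15 d23 d24 d25 d34 d35 d45 : ℝ) :
    (pentatopeGram d12 d13 d14 d15 d23 d24 d25 d34 d35 d45 *
        (1 - (5 : ℝ)⁻¹ • onesMatrix (Fin 4) ℝ) *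
        pentatopeGram d12 d13 d14 d15 d23 d24 d25 d34 d35 d45 *
        (1 - (5 : ℝ)⁻¹ • onesMatrix (Fin 4) ℝ)).trace =
      Theta d12 d13 d14 d15 d23 d24 d25 d34 d35 d45 / 3600 := by
  simp only [Matrix.trace, Matrix.diag, Matrix.mul_apply, Fin.sum_univ_four, Matrix.sub_apply,
    Matrix.one_apply, Matrix.smul_apply, onesMatrix, Matrix.of_apply]
  simp [pentatopeGram, Theta]
  ring

theorem five_rpow_three_div_four : (5 : ℝ) ^ ((3 : ℝ) / 4) = √(5 * √5) := by
  rw [Real.sqrt_eq_rpow, Real.sqrt_eq_rpow, ← Real.rpow_one_add' (by norm_num) (by norm_num),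
    ← Real.rpow_mul (by norm_num)]
  norm_num

theorem two_div_sqrt_trace_eq {a v Θ : ℝ} (hv : 0 < v) (ha : a ^ 4 = 96 * v / √5) :
    2 / √((2 / a ^ 2) ^ 2 * (Θ / 3600)) = 6 * (5 : ℝ) ^ ((3 : ℝ) / 4) * √(384 * v / Θ) := by
  have h5 : √5 ^ 2 = 5 := Real.sq_sqrt (by norm_num)
  have hc : (2 / a ^ 2) ^ 2 = √5 / (24 * v) := by
    rw [div_pow, ← pow_mul, ha]
    field_simp
    ring
  rw [hc, five_rpow_three_div_four, show (6 : ℝ) = √36 by norm_num, show (2 : ℝ) = √4 by norm_num,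
    ← Real.sqrt_div (by norm_num), ← Real.sqrt_mul (by norm_num), ← Real.sqrt_mul (by positivity)]
  congr 1
  rcases eq_or_ne Θ 0 with rfl | hΘ
  · simp
  field_simp
  linear_combination (-69120) * h5

theorem quality_heuristic_three_general (p : Fin 5 → EuclideanSpace ℝ (Fin 4))
    (v a : ℝ)
    (hv : v = |(edgeMatrix p).det| / 24) (hvpos : 0 < v)
    (ha : a = (96 * v / Real.sqrt 5) ^ ((1 : ℝ) / 4)) :
    2 * (shapeMatrix a p).det ^ ((1 : ℝ) / 4) /
        Real.sqrt (((shapeMatrix a p) * (shapeMatrix a p)ᵀ).trace) =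
      6 * (5 : ℝ) ^ ((3 : ℝ) / 4) *
        Real.sqrt (384 * v /
          Theta (dsq p 0 1) (dsq p 0 2) (dsq p 0 3) (dsq p 0 4) (dsq p 1 2)
            (dsq p 1 3) (dsq p 1 4) (dsq p 2 3) (dsq p 2 4) (dsq p 3 4)) := by
  have ha4 : a ^ 4 = 96 * v / √5 := by
    rw [ha, show (1 : ℝ) / 4 = ((4 : ℕ) : ℝ)⁻¹ by norm_num,
      Real.rpow_inv_natCast_pow (by positivity) (by norm_num)]
  have ha0 : a ≠ 0 := by
    rw [ha]
    positivity
  have hdet : (shapeMatrix a p).det = 1 := by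
    have hT : (edgeMatrix p).det ^ 2 = (24 * v) ^ 2 := by
      rw [← sq_abs, hv]
      ring
    have hR : (regularPentatopeMatrix a).det ^ 2 = (24 * v) ^ 2 := by
      rw [det_regularPentatopeMatrix_sq, show a ^ 8 = (a ^ 4) ^ 2 by ring, ha4]
      field_simp
      rw [Real.sq_sqrt (by norm_num)]
      ring
    rw [shapeMatrix, det_transpose_inv_mul_mul_inv, det_mul, det_transpose, ← sq, hT, hR,
      div_self (by positivity)]
  have htrace : ((shapeMatrix a p) * (shapeMatrix a p)ᵀ).trace = (2 / a ^ 2) ^ 2 *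
      (Theta (dsq p 0 1) (dsq p 0 2) (dsq p 0 3) (dsq p 0 4) (dsq p 1 2)
        (dsq p 1 3) (dsq p 1 4) (dsq p 2 3) (dsq p 2 4) (dsq p 3 4) / 3600) := by
    rw [shapeMatrix, trace_transpose_inv_mul_mul_inv_mul_transpose, transpose_mul,
      transpose_transpose, inv_gram_regularPentatopeMatrix ha0, edgeMatrix_gram,
      ← trace_pentatopeGram_mul_sq]
    simp only [Matrix.mul_smul, Matrix.smul_mul, smul_smul, trace_smul, smul_eq_mul]
    ring
  rw [hdet, Real.one_rpow, mul_one, htrace, two_div_sqrt_trace_eq hvpos ha4]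

/-- For affinely independent `p`, with hypervolume `v = |det T| / 24 > 0` and
`a = (96·v/√5)^{1/4}`, the quality heuristic
`η⁽³⁾ = 2 · (det A(R,T))^{1/4} / √(trace(A(R,T)·A(R,T)ᵀ))` satisfies
`η⁽³⁾ = 6 · 5^{3/4} · √(384·v / Θ)`. -/
theorem quality_heuristic_three (p : Fin 5 → EuclideanSpace ℝ (Fin 4))
    (hp : AffineIndependent ℝ p) (v a : ℝ)
    (hv : v = |(edgeMatrix p).det| / 24) (hvpos : 0 < v)
    (ha : a = (96 * v / Real.sqrt 5) ^ ((1 : ℝ) / 4)) :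
    2 * (shapeMatrix a p).det ^ ((1 : ℝ) / 4) /
        Real.sqrt (((shapeMatrix a p) * (shapeMatrix a p)ᵀ).trace) =
      6 * (5 : ℝ) ^ ((3 : ℝ) / 4) *
        Real.sqrt (384 * v /
          Theta (dsq p 0 1) (dsq p 0 2) (dsq p 0 3) (dsq p 0 4) (dsq p 1 2)
            (dsq p 1 3) (dsq p 1 4) (dsq p 2 3) (dsq p 2 4) (dsq p 3 4)) :=
  quality_heuristic_three_general p v a hv hvpos ha
end

section
/- Let M, G be 4×4 real matrices with M = GᵀG and det G > 0, and let a, b, c, d, e, f ∈ ℝ⁴. Then InHypersphere(G·a, G·b, G·c, G·d, G·e, G·f) = √(det M) · [ (a−f)ᵀM(a−f)·det D₁ − (b−f)ᵀM(b−f)·det D₂ + (c−f)ᵀM(c−f)·det D₃ − (d−f)ᵀM(d−f)·det D₄ + (e−f)ᵀM(e−f)·det D₅ ], where Dₖ is the 4×4 matrix whose rows are the transposed difference vectors (x−f)ᵀ for x ranging over (a,b,c,d,e) with the k-th point omitted, in order. That is, the metric-weighted in-hypersphere predicate InHypersphere_M can be computed directly from M without factorizing M, and agrees with the standard in-hypersphere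 predicate applied to the scaled points. -/
/-!
The differences of the scaled points are `G (x − f)`, and their squared lengths are the
`M`-quadratic forms `(x − f)ᵀ M (x − f)`. Expanding the lifted 5×5 determinant along its last
column, each 4×4 cofactor has rows `G (x − f)` and therefore equals `det G` times the
corresponding `det Dₖ`; finally `det G = √(det M)` since `det M = (det G)²` and `det G > 0`.
-/

open Matrix

/-- The standard in-hypersphere predicate of points `a, b, c, d, e, f ∈ ℝ⁴`: the
determinant of the 5×5 matrix whose rows are `[(x−f)ᵀ, (x−f)ᵀ(x−f)]` for
`x = a, b, c, d, e`. -/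
noncomputable def inHypersphere (a b c d e f : Fin 4 → ℝ) : ℝ :=
  (Matrix.of fun (i : Fin 5) =>
    Fin.snoc ((![a, b, c, d, e]) i - f)
      ((((![a, b, c, d, e]) i - f) ⬝ᵥ ((![a, b, c, d, e]) i - f)) : ℝ)).det

namespace Matrix

variable {R : Type*} [CommRing R]

theorem sqrt_det_transpose_mul_self {n : Type*} [Fintype n] [DecidableEq n]
    {G : Matrix n n ℝ} (hG : 0 ≤ G.det) : √(Gᵀ * G).det = G.det := by
  rw [det_mul, det_transpose, Real.sqrt_mul_self hG]

theorem mulVec_dotProduct_mulVec_self {m n : Type*} [Fintype m] [Fintype n]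
    (G : Matrix m n R) (v : n → R) : G *ᵥ v ⬝ᵥ G *ᵥ v = v ⬝ᵥ (Gᵀ * G) *ᵥ v := by
  rw [← mulVec_mulVec, dotProduct_mulVec v, vecMul_transpose]

theorem of_mulVec_eq_mul_transpose {l m n : Type*} [Fintype n]
    (G : Matrix m n R) (w : l → n → R) : of (fun k => G *ᵥ w k) = of w * Gᵀ := by
  ext k j
  simp [mul_apply, mulVec, dotProduct, mul_comm]

theorem det_of_mulVec {n : Type*} [Fintype n] [DecidableEq n] (G : Matrix n n R)
    (w : n → n → R) : (of fun k => G *ᵥ w k).det = (of w).det * G.det := by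
  rw [of_mulVec_eq_mul_transpose, det_mul, det_transpose]

theorem det_of_snoc {n : ℕ} (u : Fin (n + 1) → Fin n → R) (q : Fin (n + 1) → R) :
    (of fun i => Fin.snoc (u i) (q i) : Matrix (Fin (n + 1)) (Fin (n + 1)) R).det =
      ∑ i : Fin (n + 1), (-1) ^ ((i : ℕ) + n) * q i * (of fun k => u (i.succAbove k)).det := by
  rw [det_succ_column _ (Fin.last n)]
  simp only [of_apply, Fin.snoc_last, Fin.val_last, Fin.succAbove_last]
  congr! 3 with i
  ext k j
  simp

theorem det_of_snoc_mulVec {n : ℕ} (G : Matrix (Fin n) (Fin n) R)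
    (u : Fin (n + 1) → Fin n → R) (q : Fin (n + 1) → R) :
    (of fun i => Fin.snoc (G *ᵥ u i) (q i) : Matrix (Fin (n + 1)) (Fin (n + 1)) R).det =
      G.det * (of fun i => Fin.snoc (u i) (q i) : Matrix (Fin (n + 1)) (Fin (n + 1)) R).det := by
  simp only [det_of_snoc, det_of_mulVec, Finset.mul_sum]
  exact Finset.sum_congr rfl fun i _ => by ring

theorem det_of_snoc_fin_five (p : Fin 5 → Fin 4 → R) (q : Fin 5 → R) :
    (of fun i => Fin.snoc (p i) (q i) : Matrix (Fin 5) (Fin 5) R).det =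
      q 0 * (of ![p 1, p 2, p 3, p 4]).det - q 1 * (of ![p 0, p 2, p 3, p 4]).det +
        q 2 * (of ![p 0, p 1, p 3, p 4]).det - q 3 * (of ![p 0, p 1, p 2, p 4]).det +
          q 4 * (of ![p 0, p 1, p 2, p 3]).det := by
  rw [det_of_snoc, Fin.sum_univ_five]
  norm_num [sub_eq_add_neg]
  congr! with k k k k k <;> fin_cases k <;> rfl

end Matrix

/-- The metric-weighted in-hypersphere predicate in 4D: with `M = GᵀG`, `det G > 0`, the
standard in-hypersphere predicate applied to the scaled points `G·a, …, G·f` equals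
`√(det M)` times the alternating sum `Σ ± (x−f)ᵀM(x−f)·det Dₖ`, computed directly from
`M` without factorizing it. -/
theorem inHypersphere_metric_weighted (M G : Matrix (Fin 4) (Fin 4) ℝ)
    (hM : M = Gᵀ * G) (hG : 0 < G.det) (a b c d e f : Fin 4 → ℝ) :
    inHypersphere (G.mulVec a) (G.mulVec b) (G.mulVec c) (G.mulVec d) (G.mulVec e)
        (G.mulVec f) =
      Real.sqrt M.det *
        (((a - f) ⬝ᵥ M.mulVec (a - f)) *
            (Matrix.of ![b - f, c - f, d - f, e - f]).det -
          ((b - f) ⬝ᵥ M.mulVec (b - f)) *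
            (Matrix.of ![a - f, c - f, d - f, e - f]).det +
          ((c - f) ⬝ᵥ M.mulVec (c - f)) *
            (Matrix.of ![a - f, b - f, d - f, e - f]).det -
          ((d - f) ⬝ᵥ M.mulVec (d - f)) *
            (Matrix.of ![a - f, b - f, c - f, e - f]).det +
          ((e - f) ⬝ᵥ M.mulVec (e - f)) *
            (Matrix.of ![a - f, b - f, c - f, d - f]).det) := by
  subst hM
  set u : Fin 5 → Fin 4 → ℝ := fun i => ![a, b, c, d, e] i - f
  have hdiff : ∀ i, ![G *ᵥ a, G *ᵥ b, G *ᵥ c, G *ᵥ d, G *ᵥ e] i - G *ᵥ f = G *ᵥ u i := by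
    intro i
    fin_cases i <;> simp [u, mulVec_sub]
  have hlift : inHypersphere (G *ᵥ a) (G *ᵥ b) (G *ᵥ c) (G *ᵥ d) (G *ᵥ e) (G *ᵥ f) =
      (of fun i => Fin.snoc (G *ᵥ u i) (u i ⬝ᵥ (Gᵀ * G) *ᵥ u i)).det := by
    simp only [inHypersphere, hdiff, mulVec_dotProduct_mulVec_self]
  rw [hlift, det_of_snoc_mulVec, det_of_snoc_fin_five, sqrt_det_transpose_mul_self hG.le]
  rfl
end

section
/- Let d ≥ 1, let M, G be d×d real matrices with M = GᵀG and det G > 0, and let p₁,…,p_{d+2} ∈ ℝᵈ. Then the determinant of the (d+1)×(d+1) matrix whose i-th row (1 ≤ i ≤ d+1) is [(G·(pᵢ − p_{d+2}))ᵀ, ‖G·(pᵢ − p_{d+2})‖²] equals (−1)ᵈ · √(det M) · Σ_{i=1}^{d+1} (−1)^{i−1} · (pᵢ−p_{d+2})ᵀM(pᵢ−p_{d+2}) · det Dᵢ, where Dᵢ is the d×d matrix whose rows are (p_j − p_{d+2})ᵀ for j ∈ {1,…,d+1} \ {i} in increasing order of j. This is the general d-dimensional identity defining the metric-weighted in-hypersphere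 predicate InHypersphere_M. -/
open Matrix

/-- The general `d`-dimensional identity defining the metric-weighted in-hypersphere
predicate `InHypersphere_M`: with `M = GᵀG`, `det G > 0`, and points
`p₁, …, p_{d+2} ∈ ℝᵈ`, the determinant of the `(d+1)×(d+1)` matrix whose `i`-th row is
`[(G·(pᵢ − p_{d+2}))ᵀ, ‖G·(pᵢ − p_{d+2})‖²]` equals
`(−1)ᵈ · √(det M) · Σᵢ (−1)^{i−1} · (pᵢ−p_{d+2})ᵀM(pᵢ−p_{d+2}) · det Dᵢ`,
where `Dᵢ` is the `d×d` matrix whose rows are `(p_j − p_{d+2})ᵀ` for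
`j ∈ {1,…,d+1} \ {i}` in increasing order. -/
theorem inHypersphere_metric_weighted_general (d : ℕ) (hd : 1 ≤ d)
    (M G : Matrix (Fin d) (Fin d) ℝ) (hM : M = Gᵀ * G) (hG : 0 < G.det)
    (p : Fin (d + 2) → (Fin d → ℝ)) :
    (Matrix.of fun (i : Fin (d + 1)) =>
        Fin.snoc (G.mulVec (p i.castSucc - p (Fin.last (d + 1))))
          ((G.mulVec (p i.castSucc - p (Fin.last (d + 1)))) ⬝ᵥ
            (G.mulVec (p i.castSucc - p (Fin.last (d + 1)))))).det =
      (-1 : ℝ) ^ d * Real.sqrt M.det *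
        ∑ i : Fin (d + 1),
          (-1 : ℝ) ^ (i : ℕ) *
            ((p i.castSucc - p (Fin.last (d + 1))) ⬝ᵥ
              M.mulVec (p i.castSucc - p (Fin.last (d + 1)))) *
            (Matrix.of fun (j : Fin d) (k : Fin d) =>
              p (i.succAbove j).castSucc k - p (Fin.last (d + 1)) k).det := by
  set v : Fin (d + 1) → Fin d → ℝ :=
    fun i => p i.castSucc - p (Fin.last (d + 1)) with hv
  have hsqrt : Real.sqrt M.det = G.det := by
    have : M.det = G.det ^ 2 := by rw [hM, det_mul, det_transpose]; ring
    rw [this, Real.sqrt_sq hG.le]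
  set A : Matrix (Fin (d + 1)) (Fin (d + 1)) ℝ :=
    Matrix.of fun i => Fin.snoc (G.mulVec (v i)) ((G.mulVec (v i)) ⬝ᵥ (G.mulVec (v i)))
    with hA
  rw [Matrix.det_succ_column A (Fin.last d), hsqrt, Finset.mul_sum]
  refine Finset.sum_congr rfl fun i _ => ?_
  have hlast : A i (Fin.last d) = v i ⬝ᵥ M.mulVec (v i) := by
    simp only [hA, Matrix.of_apply, Fin.snoc_last, hM, ← Matrix.mulVec_mulVec,
      Matrix.dotProduct_mulVec, Matrix.vecMul_transpose]
  have hsub : A.submatrix i.succAbove (Fin.last d).succAbove =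
      (Matrix.of fun (j : Fin d) (k : Fin d) =>
        p (i.succAbove j).castSucc k - p (Fin.last (d + 1)) k) * Gᵀ := by
    ext j k
    simp [hA, Fin.succAbove_last, Matrix.mul_apply, Matrix.mulVec, dotProduct,
      mul_comm, hv, Pi.sub_apply]
  rw [hlast, hsub, det_mul, det_transpose]
  simp only [Fin.val_last]
  ring
end
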